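/- If τ ∧ τ' < ∞, then for every real number γ, Σ_{t=0}^{τ∧τ'} (γ·1_O(x_t) − 1_{K∖O}(x_t)) = γ·1_{{τ < τ'}} − (τ ∧ τ'), where 1_{{·}} denotes the indicator of the stated event. -/

import Mathlib

/-! Before time `τ ∧ τ'` the sequence stays in `K \ O`, so each of those `τ ∧ τ'` steps contributes
`-1`. At time `τ ∧ τ'` it lies in `O ∪ Kᶜ`, and since `O` and `Kᶜ` are disjoint it lies in `O`
exactly when `τ < τ'`; that last step contributes `γ` or `0` accordingly. -/

open Set Finset

/-- First hitting time of the set `S` by the sequence `x`, valued in `ℕ∞` (`⊤` if never hit). -/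
noncomputable def hitTime {X : Type*} (S : Set X) (x : ℕ → X) : ℕ∞ :=
  sInf ((fun t : ℕ => (t : ℕ∞)) '' {t : ℕ | x t ∈ S})

section HitTime

variable {X : Type*} {S T : Set X} {x : ℕ → X} {t : ℕ}

lemma hitTime_le_of_mem (h : x t ∈ S) : hitTime S x ≤ t := sInf_le ⟨t, h, rfl⟩

lemma notMem_of_lt_hitTime (h : (t : ℕ∞) < hitTime S x) : x t ∉ S :=
  fun hx => (hitTime_le_of_mem hx).not_gt h

lemma hitTime_union : hitTime (S ∪ T) x = min (hitTime S x) (hitTime T x) := by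
  change sInf (_ '' ({t | x t ∈ S} ∪ {t | x t ∈ T})) = _
  rw [image_union, sInf_union]
  rfl

lemma mem_of_hitTime_lt_top (h : hitTime S x < ⊤) : x (hitTime S x).toNat ∈ S := by
  have hne : ((fun t : ℕ => (t : ℕ∞)) '' {t : ℕ | x t ∈ S}).Nonempty := by
    by_contra hempty
    simp [hitTime, not_nonempty_iff_eq_empty.1 hempty] at h
  obtain ⟨t, ht, hτ⟩ := csInf_mem hne
  rwa [hitTime, ← hτ, ENat.toNat_natCast]

lemma notMem_union_of_lt_min_hitTime (h : (t : ℕ∞) < min (hitTime S x) (hitTime T x)) :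
    x t ∉ S ∪ T :=
  notMem_of_lt_hitTime (hitTime_union ▸ h)

lemma mem_union_at_min_hitTime (hfin : min (hitTime S x) (hitTime T x) < ⊤) :
    x (min (hitTime S x) (hitTime T x)).toNat ∈ S ∪ T :=
  hitTime_union (S := S) ▸ mem_of_hitTime_lt_top (hitTime_union ▸ hfin)

lemma mem_at_min_hitTime_iff (hST : Disjoint S T)
    (hfin : min (hitTime S x) (hitTime T x) < ⊤) :
    x (min (hitTime S x) (hitTime T x)).toNat ∈ S ↔ hitTime S x < hitTime T x := by
  rcases lt_or_ge (hitTime S x) (hitTime T x) with h | h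
  · rw [min_eq_left h.le] at hfin ⊢
    exact iff_of_true (mem_of_hitTime_lt_top hfin) h
  · rw [min_eq_right h] at hfin ⊢
    exact iff_of_false (hST.notMem_of_mem_right (mem_of_hitTime_lt_top hfin)) h.not_gt

end HitTime

theorem stmt16 {X : Type*} (O K : Set X) (hOK : O ⊆ K) (x : ℕ → X)
    (hfin : min (hitTime O x) (hitTime Kᶜ x) < ⊤) (γ : ℝ) :
    ∑ t ∈ Finset.range ((min (hitTime O x) (hitTime Kᶜ x)).toNat + 1),
        (γ * O.indicator (1 : X → ℝ) (x t) - (K \ O).indicator (1 : X → ℝ) (x t)) =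
      γ * (if hitTime O x < hitTime Kᶜ x then (1 : ℝ) else 0) -
        ((min (hitTime O x) (hitTime Kᶜ x)).toNat : ℝ) := by
  have hdisj : Disjoint O Kᶜ := Set.disjoint_compl_right_iff_subset.2 hOK
  have hO := mem_at_min_hitTime_iff hdisj hfin
  have hN_mem := mem_union_at_min_hitTime hfin
  obtain ⟨N, hN⟩ : ∃ N : ℕ, min (hitTime O x) (hitTime Kᶜ x) = N :=
    ⟨_, (ENat.natCast_toNat hfin.ne).symm⟩
  rw [hN, ENat.toNat_natCast] at hO hN_mem ⊢
  have hN_notMem : x N ∉ K \ O := fun h => hN_mem.elim h.2 (· h.1)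
  have hbefore : ∀ t ∈ Finset.range N,
      γ * O.indicator (1 : X → ℝ) (x t) - (K \ O).indicator (1 : X → ℝ) (x t) = -1 := by
    intro t ht
    have hKO : x t ∈ K \ O := by
      have := notMem_union_of_lt_min_hitTime (hN ▸ Nat.cast_lt.2 (Finset.mem_range.1 ht))
      simpa [and_comm] using this
    simp [indicator_of_mem hKO, indicator_of_notMem hKO.2]
  rw [Finset.sum_range_succ, Finset.sum_congr rfl hbefore, indicator_of_notMem hN_notMem]
  simp only [sum_neg_distrib, sum_const, card_range, nsmul_eq_mul, mul_one, indicator, hO,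
    Pi.one_apply, mul_ite, mul_zero, sub_zero]
  ring
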